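/- Let X be a normed lattice with norm completion X̃. The following are equivalent: (1) X is majorizing in X̃; (2) every norm Cauchy sequence in X has an order bounded subsequence; (3) every increasing norm Cauchy sequence in X is order bounded; (4) every norm Cauchy sequence in X has a relatively uniformly Cauchy subsequence; (5) every element of X̃ is a relative uniform limit in X̃ of a sequence in X with regulator in X; (6) the relative uniform completion X^ru equals X̃. -/

import Mathlib

open Filter Set

section Defs

variable (X : Type*) [Lattice X] [AddCommGroup X] [Module ℝ X]

/-- Archimedean property for a vector lattice. -/
def VLArchimedean : Prop := ∀ x y : X, (∀ n : ℕ, n • x ≤ y) → x ≤ 0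

variable {X}

/-- `Y` is a sublattice: a linear subspace closed under `⊔`. -/
def IsVLSublattice (Y : Set X) : Prop :=
  (0 : X) ∈ Y ∧ (∀ a ∈ Y, ∀ b ∈ Y, a + b ∈ Y) ∧
    (∀ (c : ℝ), ∀ a ∈ Y, c • a ∈ Y) ∧ (∀ a ∈ Y, ∀ b ∈ Y, a ⊔ b ∈ Y)

/-- `Y` is majorizing in `X`. -/
def Majorizing (Y : Set X) : Prop := ∀ x : X, 0 ≤ x → ∃ y ∈ Y, x ≤ y

/-- Relative uniform convergence of a sequence with regulator `e`. -/
def RUTendsto (x : ℕ → X) (l e : X) : Prop :=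
  0 ≤ e ∧ ∀ ε : ℝ, 0 < ε → ∃ N, ∀ n ≥ N, |x n - l| ≤ ε • e

/-- Relative uniform Cauchy sequence with regulator `e`. -/
def RUCauchy (x : ℕ → X) (e : X) : Prop :=
  0 ≤ e ∧ ∀ ε : ℝ, 0 < ε → ∃ N, ∀ n ≥ N, ∀ m ≥ N, |x n - x m| ≤ ε • e

/-- Relative uniform convergence of a net with regulator `e`. -/
def RUTendstoNet {ι : Type*} [Preorder ι] (x : ι → X) (l e : X) : Prop :=
  0 ≤ e ∧ ∀ ε : ℝ, 0 < ε → ∃ α₀, ∀ α ≥ α₀, |x α - l| ≤ ε • e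

/-- Relative uniform Cauchy net with regulator `e`. -/
def RUCauchyNet {ι : Type*} [Preorder ι] (x : ι → X) (e : X) : Prop :=
  0 ≤ e ∧ ∀ ε : ℝ, 0 < ε → ∃ α₀, ∀ α ≥ α₀, ∀ β ≥ α₀, |x α - x β| ≤ ε • e

/-- Uniform adherence of a set: all relative uniform limits of sequences from `A`. -/
def uAdh (A : Set X) : Set X :=
  {l | ∃ x : ℕ → X, (∀ n, x n ∈ A) ∧ ∃ e, RUTendsto x l e}

/-- `A` is uniformly closed. -/
def RUClosed (A : Set X) : Prop := uAdh A ⊆ A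

/-- Uniform closure: the least uniformly closed superset of `A`. -/
def uClosure (A : Set X) : Set X := ⋂₀ {B : Set X | A ⊆ B ∧ RUClosed B}

variable (X)

/-- Relative uniform completeness (for sequences). -/
def RUComplete : Prop :=
  ∀ x : ℕ → X, (∃ e, RUCauchy x e) → ∃ l e, RUTendsto x l e

variable {X}

/-- Relative uniform completeness of a sublattice `Y` (regulators taken in `Y`). -/
def RUCompleteIn (Y : Set X) : Prop :=
  ∀ x : ℕ → X, (∀ n, x n ∈ Y) → (∃ e ∈ Y, RUCauchy x e) →
    ∃ l ∈ Y, ∃ e ∈ Y, RUTendsto x l e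

/-- An (order) ideal of a vector lattice: a solid linear subspace. -/
def IsVLIdeal (I : Set X) : Prop :=
  (0 : X) ∈ I ∧ (∀ a ∈ I, ∀ b ∈ I, a + b ∈ I) ∧ (∀ (c : ℝ), ∀ a ∈ I, c • a ∈ I) ∧
    ∀ x : X, ∀ y ∈ I, |x| ≤ |y| → x ∈ I

/-- The ideal generated by a set. -/
def idealGen (Y : Set X) : Set X := ⋂₀ {I : Set X | Y ⊆ I ∧ IsVLIdeal I}

/-- `B` is a projection band: an ideal along which the space decomposes. -/
def IsProjectionBand (B : Set X) : Prop :=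
  IsVLIdeal B ∧ ∀ x : X, ∃ b ∈ B, ∃ d : X, (∀ y ∈ B, |d| ⊓ |y| = 0) ∧ x = b + d

end Defs

/-!
In a Banach lattice every norm-convergent sequence has a relatively uniformly convergent
subsequence: if `‖x (φ k) - l‖ ≤ 4⁻¹ ^ k`, then `e = ∑ 2 ^ k • |x (φ k) - l|` is a regulator.
When `X` majorizes `E` that regulator can be replaced by one in `X`, which gives (1) ⇒ (4), (5).
Conversely, the elements of `E` dominated by `X` form a relatively uniformly complete sublattice
containing `X`, so (6) forces it to be all of `E`; and under (3) the partial suprema of a fast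
approximation of `x` by elements of `X` form an increasing Cauchy sequence whose bound in `X`
majorizes `x`.
-/

open Topology

lemma Monotone.abs_le_sup_of_subseq {E : Type*} [Lattice E] [AddCommGroup E]
    [IsOrderedAddMonoid E] {f : ℕ → E} (hf : Monotone f) {φ : ℕ → ℕ} (hφ : StrictMono φ) {u : E}
    (hu : ∀ n, |f (φ n)| ≤ u) (n : ℕ) : |f n| ≤ |f 0| ⊔ u :=
  sup_le ((hf hφ.le_apply).trans ((le_abs_self _).trans (hu n)) |>.trans le_sup_right)
    ((neg_le_neg (hf n.zero_le)).trans (neg_le_abs _) |>.trans le_sup_left)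

section LatticeModule

variable {E : Type*} [Lattice E] [AddCommGroup E] [Module ℝ E] {x : ℕ → E} {l e : E}

lemma abs_smul_le_smul_abs [PosSMulMono ℝ E] {c : ℝ} (hc : 0 ≤ c) (a : E) :
    |c • a| ≤ c • |a| :=
  sup_le (smul_le_smul_of_nonneg_left (le_abs_self a) hc)
    (by rw [← smul_neg]; exact smul_le_smul_of_nonneg_left (neg_le_abs a) hc)

lemma abs_smul_le [PosSMulMono ℝ E] (c : ℝ) (a : E) : |c • a| ≤ |c| • |a| := by
  rcases le_total 0 c with hc | hc
  · simpa [abs_of_nonneg hc] using abs_smul_le_smul_abs hc a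
  · simpa [abs_of_nonpos hc] using abs_smul_le_smul_abs (neg_nonneg.2 hc) (-a)

lemma RUTendsto.mono_regulator [PosSMulMono ℝ E] {e' : E} (h : RUTendsto x l e) (he : e ≤ e') :
    RUTendsto x l e' :=
  ⟨h.1.trans he, fun ε hε => (h.2 ε hε).imp
    fun _ hN n hn => (hN n hn).trans (smul_le_smul_of_nonneg_left he hε.le)⟩

lemma ruTendsto_of_abs_sub_le_smul [SMulPosMono ℝ E] {c : ℕ → ℝ} (he : 0 ≤ e)
    (hc : Tendsto c atTop (𝓝 0)) (h : ∀ n, |x n - l| ≤ c n • e) : RUTendsto x l e :=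
  ⟨he, fun _ hε => (eventually_atTop.mp (hc.eventually (gt_mem_nhds hε))).imp
    fun _ hN n hn => (h n).trans (smul_le_smul_of_nonneg_right (hN n hn).le he)⟩

variable [IsOrderedAddMonoid E]

lemma inv_two_pow_smul_nonneg {a : E} (ha : 0 ≤ a) (k : ℕ) : 0 ≤ ((2 : ℝ) ^ k)⁻¹ • a := by
  induction k with
  | zero => simpa using ha
  | succ k ih =>
    apply nsmul_two_semiclosed
    rwa [← Nat.cast_smul_eq_nsmul ℝ, smul_smul, pow_succ, mul_inv, mul_left_comm, Nat.cast_ofNat,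
      mul_inv_cancel₀ two_ne_zero, mul_one]

-- Real scalars are not assumed to respect the order. Dyadic ones do in any lattice-ordered group
-- (`0 ≤ 2 • a → 0 ≤ a`), and the closed positive cone passes this on to their limits.
instance IsOrderedModule.real_of_closedIciTopology [TopologicalSpace E] [ClosedIciTopology E]
    [ContinuousSMul ℝ E] : IsOrderedModule ℝ E :=
  .of_smul_nonneg fun c hc a ha => by
    have hlim : Tendsto (fun k : ℕ => ((⌊c * 2 ^ k⌋₊ : ℝ) / 2 ^ k) • a) atTop (𝓝 (c • a)) :=
      ((tendsto_nat_floor_mul_div_atTop hc).comp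
        (tendsto_pow_atTop_atTop_of_one_lt one_lt_two)).smul_const a
    refine ge_of_tendsto' hlim fun k => ?_
    rw [div_eq_mul_inv, mul_smul, Nat.cast_smul_eq_nsmul]
    exact nsmul_nonneg (inv_two_pow_smul_nonneg ha k) _

lemma RUCauchy.exists_abs_le_partialSups_add (h : RUCauchy x e) :
    ∃ N, ∀ n, |x n| ≤ partialSups (fun k => |x k|) N + e := by
  obtain ⟨N, hN⟩ := h.2 1 one_pos
  refine ⟨N, fun n => ?_⟩
  rcases le_total n N with hn | hn
  · exact (le_partialSups_of_le (fun k => |x k|) hn).trans (le_add_of_nonneg_right h.1)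
  · calc |x n| = |x N + (x n - x N)| := by rw [add_sub_cancel]
      _ ≤ |x N| + |x n - x N| := abs_add_le _ _
      _ ≤ partialSups (fun k => |x k|) N + e := by
        gcongr
        · exact le_partialSups (fun k => |x k|) N
        · simpa using hN n hn N le_rfl

lemma RUTendsto.ruCauchy (h : RUTendsto x l e) : RUCauchy x e := by
  refine ⟨h.1, fun ε hε => (h.2 (ε / 2) (half_pos hε)).imp fun N hN n hn m hm => ?_⟩
  calc |x n - x m| = |(x n - l) + -(x m - l)| := by congr 1; abel
    _ ≤ |x n - l| + |x m - l| := (abs_add_le _ _).trans_eq (by rw [abs_neg])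
    _ ≤ (ε / 2) • e + (ε / 2) • e := add_le_add (hN n hn) (hN m hm)
    _ = ε • e := by rw [← add_smul, add_halves]

end LatticeModule

namespace IsVLSublattice

variable {E : Type*} [AddCommGroup E] [Lattice E] [Module ℝ E] {X : Set E}

lemma add_mem (hX : IsVLSublattice X) {a b : E} (ha : a ∈ X) (hb : b ∈ X) : a + b ∈ X :=
  hX.2.1 a ha b hb

lemma sup_mem (hX : IsVLSublattice X) {a b : E} (ha : a ∈ X) (hb : b ∈ X) : a ⊔ b ∈ X :=
  hX.2.2.2 a ha b hb

lemma abs_mem (hX : IsVLSublattice X) {a : E} (ha : a ∈ X) : |a| ∈ X :=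
  hX.sup_mem ha (by simpa using hX.2.2.1 (-1) a ha)

lemma partialSups_mem (hX : IsVLSublattice X) {f : ℕ → E} (hf : ∀ n, f n ∈ X) (n : ℕ) :
    partialSups f n ∈ X := by
  rw [partialSups_apply]
  exact Finset.sup'_mem X (fun a ha b hb => hX.sup_mem ha hb) _ _ f fun k _ => hf k

end IsVLSublattice

section AbsDominated

variable {E : Type*} [Lattice E] [AddCommGroup E] {X : Set E}

/-- The ideal generated by `X` when `X` is a sublattice. -/
def absDominated (X : Set E) : Set E := {x | ∃ u ∈ X, |x| ≤ u}

lemma mem_absDominated_of_abs_le {a b : E} (hb : b ∈ absDominated X) (h : |a| ≤ |b|) :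
    a ∈ absDominated X :=
  let ⟨u, huX, hu⟩ := hb
  ⟨u, huX, h.trans hu⟩

variable [Module ℝ E]

lemma subset_absDominated (hX : IsVLSublattice X) : X ⊆ absDominated X :=
  fun a ha => ⟨|a|, hX.abs_mem ha, le_rfl⟩

lemma isVLSublattice_absDominated [IsOrderedAddMonoid E] [PosSMulMono ℝ E]
    (hX : IsVLSublattice X) : IsVLSublattice (absDominated X) := by
  refine ⟨subset_absDominated hX hX.1, ?_, ?_, ?_⟩
  · rintro a ⟨u, huX, hu⟩ b ⟨v, hvX, hv⟩
    exact ⟨u + v, hX.add_mem huX hvX, (abs_add_le a b).trans (add_le_add hu hv)⟩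
  · rintro c a ⟨u, huX, hu⟩
    exact ⟨|c| • u, hX.2.2.1 _ u huX,
      (abs_smul_le c a).trans (smul_le_smul_of_nonneg_left hu (abs_nonneg c))⟩
  · rintro a ⟨u, huX, hu⟩ b ⟨v, hvX, hv⟩
    exact ⟨u ⊔ v, hX.sup_mem huX hvX, sup_le
      (sup_le_sup ((le_abs_self a).trans hu) ((le_abs_self b).trans hv))
      ((neg_le_neg le_sup_left).trans ((neg_le_abs a).trans (hu.trans le_sup_left)))⟩

end AbsDominated

section NormedLattice

variable {E : Type*} [NormedAddCommGroup E] [Lattice E] [HasSolidNorm E]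

lemma dist_partialSups_add_one_le [IsOrderedAddMonoid E] (x : ℕ → E) (n : ℕ) :
    dist (partialSups x n) (partialSups x (n + 1)) ≤ dist (x n) (x (n + 1)) := by
  have hn : partialSups x n = x n ⊔ partialSups x n := (sup_eq_right.mpr (le_partialSups x n)).symm
  rw [partialSups_add_one, dist_eq_norm, dist_eq_norm, sup_comm]
  nth_rewrite 1 [hn]
  exact norm_sup_sub_sup_le_norm _ _ _

variable [NormedSpace ℝ E] {x : ℕ → E} {l e : E}

lemma norm_le_mul_norm_of_abs_le_smul {a b : E} {c : ℝ} (hc : 0 ≤ c) (h : |a| ≤ c • b) :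
    ‖a‖ ≤ c * ‖b‖ := by
  have := HasSolidNorm.solid (h.trans (le_abs_self _))
  rwa [norm_smul, Real.norm_of_nonneg hc] at this

lemma RUTendsto.tendsto (h : RUTendsto x l e) : Tendsto x atTop (𝓝 l) := by
  refine Metric.tendsto_atTop.mpr fun δ hδ => ?_
  obtain ⟨ε, hε, hεδ⟩ := exists_pos_mul_lt hδ ‖e‖
  refine (h.2 ε hε).imp fun N hN n hn => ?_
  rw [dist_eq_norm]
  exact (norm_le_mul_norm_of_abs_le_smul hε.le (hN n hn)).trans_lt (by rwa [mul_comm])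

lemma RUCauchy.cauchySeq (h : RUCauchy x e) : CauchySeq x := by
  refine Metric.cauchySeq_iff'.mpr fun δ hδ => ?_
  obtain ⟨ε, hε, hεδ⟩ := exists_pos_mul_lt hδ ‖e‖
  refine (h.2 ε hε).imp fun N hN n hn => ?_
  rw [dist_eq_norm]
  exact (norm_le_mul_norm_of_abs_le_smul hε.le (hN n hn N le_rfl)).trans_lt (by rwa [mul_comm])

variable [IsOrderedAddMonoid E] {X : Set E}

lemma RUCauchy.ruTendsto_of_tendsto (h : RUCauchy x e) (hx : Tendsto x atTop (𝓝 l)) :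
    RUTendsto x l e := by
  refine ⟨h.1, fun ε hε => (h.2 ε hε).imp fun N hN n hn => ?_⟩
  have hlim : Tendsto (fun m => |x n - x m|) atTop (𝓝 |x n - l|) :=
    (tendsto_const_nhds.sub hx).sup_nhds (tendsto_const_nhds.sub hx).neg
  exact le_of_tendsto hlim (eventually_atTop.mpr ⟨N, hN n hn⟩)

lemma sInter_ruCompleteIn_eq_univ
    (h : ∀ y : E, ∃ f : ℕ → E, (∀ n, f n ∈ X) ∧ ∃ e ∈ X, RUTendsto f y e) :
    ⋂₀ {S : Set E | IsVLSublattice S ∧ X ⊆ S ∧ RUCompleteIn S} = univ := by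
  refine eq_univ_of_forall fun y => mem_sInter.mpr ?_
  rintro S ⟨-, hXS, hS⟩
  obtain ⟨f, hfX, e, heX, hfy⟩ := h y
  obtain ⟨l, hlS, _, _, hfl⟩ := hS f (fun n => hXS (hfX n)) ⟨e, hXS heX, hfy.ruCauchy⟩
  rwa [tendsto_nhds_unique hfy.tendsto hfl.tendsto]

lemma majorizing_of_forall_monotone_cauchySeq (hX : IsVLSublattice X) (hdense : Dense X)
    (h : ∀ f : ℕ → E, (∀ n, f n ∈ X) → CauchySeq f → Monotone f → ∃ u ∈ X, ∀ n, |f n| ≤ u) :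
    Majorizing X := by
  intro y _
  choose x hxX hxy using fun n : ℕ =>
    Metric.mem_closure_iff.mp (hdense y) ((2⁻¹ : ℝ) ^ n) (by positivity)
  have hx : Tendsto x atTop (𝓝 y) :=
    tendsto_iff_dist_tendsto_zero.mpr <| squeeze_zero (fun _ => dist_nonneg)
      (fun n => (dist_comm (x n) y).trans_le (hxy n).le)
      (tendsto_pow_atTop_nhds_zero_of_lt_one (by norm_num) (by norm_num))
  have hcauchy : CauchySeq (partialSups x) := cauchySeq_of_le_geometric_two (C := 4) fun n =>
    calc dist (partialSups x n) (partialSups x (n + 1)) ≤ dist (x n) (x (n + 1)) :=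
          dist_partialSups_add_one_le x n
      _ ≤ dist y (x n) + dist y (x (n + 1)) := dist_triangle_left _ _ _
      _ ≤ 2⁻¹ ^ n + 2⁻¹ ^ (n + 1) := add_le_add (hxy n).le (hxy (n + 1)).le
      _ ≤ 4 / 2 / 2 ^ n := by rw [inv_pow, inv_pow, pow_succ]; field_simp; norm_num
  obtain ⟨u, huX, hu⟩ :=
    h _ (hX.partialSups_mem hxX) hcauchy (partialSups_monotone x)
  exact ⟨u, huX, le_of_tendsto' hx fun n =>
    (le_partialSups x n).trans ((le_abs_self _).trans (hu n))⟩

variable [CompleteSpace E]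

lemma Filter.Tendsto.exists_subseq_ruTendsto (hx : Tendsto x atTop (𝓝 l)) :
    ∃ φ : ℕ → ℕ, StrictMono φ ∧ ∃ e, RUTendsto (x ∘ φ) l e := by
  obtain ⟨φ, hφ, hφl⟩ := hx.subseq_mem fun k => Metric.ball_mem_nhds l (pow_pos (by norm_num :
    (0 : ℝ) < 4⁻¹) k)
  set d : ℕ → E := fun k => (2 : ℝ) ^ k • |x (φ k) - l|
  have hd : Summable d := by
    refine .of_norm_bounded (summable_geometric_of_lt_one (r := 2⁻¹) (by norm_num) (by norm_num))
      fun k => ?_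
    have hk : ‖x (φ k) - l‖ < 4⁻¹ ^ k := by simpa [dist_eq_norm] using hφl k
    calc ‖d k‖ = 2 ^ k * ‖x (φ k) - l‖ := by simp [d, norm_smul, norm_abs_eq_norm]
      _ ≤ 2 ^ k * 4⁻¹ ^ k := by gcongr
      _ = 2⁻¹ ^ k := by rw [← mul_pow]; norm_num
  have hd_nonneg : ∀ k, 0 ≤ d k := fun k => smul_nonneg (by positivity) (abs_nonneg _)
  refine ⟨φ, hφ, ∑' k, d k, ruTendsto_of_abs_sub_le_smul (tsum_nonneg hd_nonneg)
    (tendsto_pow_atTop_nhds_zero_of_lt_one (r := (2 : ℝ)⁻¹) (by norm_num) (by norm_num))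
    fun k => ?_⟩
  calc |x (φ k) - l| = (2⁻¹ : ℝ) ^ k • d k := by
        rw [smul_smul, ← mul_pow, inv_mul_cancel₀ two_ne_zero, one_pow, one_smul]
    _ ≤ (2⁻¹ : ℝ) ^ k • ∑' k, d k :=
        smul_le_smul_of_nonneg_left (hd.le_tsum k fun j _ => hd_nonneg j) (by positivity)

lemma Majorizing.exists_subseq_ruTendsto (hmaj : Majorizing X) (hx : Tendsto x atTop (𝓝 l)) :
    ∃ φ : ℕ → ℕ, StrictMono φ ∧ ∃ e ∈ X, RUTendsto (x ∘ φ) l e := by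
  obtain ⟨φ, hφ, e, he⟩ := hx.exists_subseq_ruTendsto
  obtain ⟨u, huX, heu⟩ := hmaj e he.1
  exact ⟨φ, hφ, u, huX, he.mono_regulator heu⟩

lemma ruCompleteIn_absDominated (hX : IsVLSublattice X) :
    RUCompleteIn (absDominated X) := by
  rintro x hx ⟨e, he, hxe⟩
  obtain ⟨l, hl⟩ := cauchySeq_tendsto_of_complete hxe.cauchySeq
  have hxl := hxe.ruTendsto_of_tendsto hl
  obtain ⟨N, hN⟩ := hxl.2 1 one_pos
  have hlN : l - x N ∈ absDominated X := mem_absDominated_of_abs_le he <| by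
    rw [abs_sub_comm]
    exact (hN N le_rfl).trans ((one_smul ℝ e).trans_le (le_abs_self e))
  refine ⟨l, ?_, e, he, hxl⟩
  simpa using (isVLSublattice_absDominated hX).add_mem hlN (hx N)

lemma majorizing_of_sInter_ruCompleteIn_eq_univ (hX : IsVLSublattice X)
    (h : ⋂₀ {S : Set E | IsVLSublattice S ∧ X ⊆ S ∧ RUCompleteIn S} = univ) :
    Majorizing X := by
  intro x _
  have hmem : absDominated X ∈ {S : Set E | IsVLSublattice S ∧ X ⊆ S ∧ RUCompleteIn S} :=
    ⟨isVLSublattice_absDominated hX, subset_absDominated hX, ruCompleteIn_absDominated hX⟩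
  have hx : x ∈ absDominated X := sInter_subset_of_mem hmem (h ▸ mem_univ x)
  obtain ⟨u, huX, hu⟩ := hx
  exact ⟨u, huX, (le_abs_self x).trans hu⟩

end NormedLattice

theorem normed_lattice_majorizing_in_completion_tfae
    {E : Type*} [NormedAddCommGroup E] [Lattice E] [HasSolidNorm E] [IsOrderedAddMonoid E]
    [NormedSpace ℝ E] [CompleteSpace E]
    {X : Set E} (hX : IsVLSublattice X) (hdense : Dense X) :
    List.TFAE [
      Majorizing X,
      ∀ f : ℕ → E, (∀ n, f n ∈ X) → CauchySeq f →
        ∃ φ : ℕ → ℕ, StrictMono φ ∧ ∃ u ∈ X, ∀ n, |f (φ n)| ≤ u,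
      ∀ f : ℕ → E, (∀ n, f n ∈ X) → CauchySeq f → Monotone f →
        ∃ u ∈ X, ∀ n, |f n| ≤ u,
      ∀ f : ℕ → E, (∀ n, f n ∈ X) → CauchySeq f →
        ∃ φ : ℕ → ℕ, StrictMono φ ∧ ∃ e ∈ X, RUCauchy (f ∘ φ) e,
      ∀ y : E, ∃ f : ℕ → E, (∀ n, f n ∈ X) ∧ ∃ e ∈ X, RUTendsto f y e,
      ⋂₀ {S : Set E | IsVLSublattice S ∧ X ⊆ S ∧ RUCompleteIn S} = Set.univ ] := by
  tfae_have 1 → 4 := fun h f _ hf => by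
    obtain ⟨l, hl⟩ := cauchySeq_tendsto_of_complete hf
    obtain ⟨φ, hφ, e, heX, he⟩ := h.exists_subseq_ruTendsto hl
    exact ⟨φ, hφ, e, heX, he.ruCauchy⟩
  tfae_have 4 → 2 := fun h f hfX hf => by
    obtain ⟨φ, hφ, e, heX, he⟩ := h f hfX hf
    obtain ⟨N, hN⟩ := he.exists_abs_le_partialSups_add
    exact ⟨φ, hφ, _, hX.add_mem (hX.partialSups_mem (fun k => hX.abs_mem (hfX (φ k))) N) heX, hN⟩
  tfae_have 2 → 3 := fun h f hfX hf hmono => by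
    obtain ⟨φ, hφ, u, huX, hu⟩ := h f hfX hf
    exact ⟨_, hX.sup_mem (hX.abs_mem (hfX 0)) huX, hmono.abs_le_sup_of_subseq hφ hu⟩
  tfae_have 3 → 1 := majorizing_of_forall_monotone_cauchySeq hX hdense
  tfae_have 1 → 5 := fun h y => by
    obtain ⟨x, hxX, hx⟩ := mem_closure_iff_seq_limit.mp (hdense y)
    obtain ⟨φ, -, e, heX, he⟩ := h.exists_subseq_ruTendsto hx
    exact ⟨x ∘ φ, fun n => hxX (φ n), e, heX, he⟩
  tfae_have 5 → 6 := sInter_ruCompleteIn_eq_univ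
  tfae_have 6 → 1 := majorizing_of_sInter_ruCompleteIn_eq_univ hX
  tfae_finish
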